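/- The octonion norm is multiplicative: for all octonions o₁ and o₂, |o₁o₂| = |o₁|·|o₂|. -/

import Mathlib

noncomputable section

/-- The quaternions over ℝ. -/
abbrev Quat : Type := Quaternion ℝ

/-- Octonions realized as pairs of quaternions (Cayley–Dickson doubling). -/
abbrev Octo : Type := Quat × Quat

/-- Cayley–Dickson multiplication: (a,b)(c,d) = (ac − d̄b, da + bc̄). -/
def omul (x y : Octo) : Octo :=
  (x.1 * y.1 - star y.2 * x.2, y.2 * x.1 + x.2 * star y.1)

/-- The octonion unit μ₄ = (0,1). -/
def oμ₄ : Octo := ((0 : Quat), (1 : Quat))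

/-- The octonion norm: |(a,b)| = √(‖a‖² + ‖b‖²). -/
def onorm (x : Octo) : ℝ := Real.sqrt (‖x.1‖ ^ 2 + ‖x.2‖ ^ 2)

/-!
Expanding `N(ac − d̄b) + N(da + bc̄)` with `N(x ± y) = N x + N y ± 2 Re(x ȳ)` and the
multiplicativity of the quaternion norm leaves `N a N c + N d N b + N d N a + N b N c` plus the
cross terms `∓ 2 Re(a c b̄ d)` and `± 2 Re(d a c b̄)`, which cancel because `Re(xy) = Re(yx)`.
-/

namespace Quaternion

variable {R : Type*} [CommRing R]

theorem re_mul_comm (a b : ℍ[R]) : (a * b).re = (b * a).re := by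
  simp only [re_mul]
  ring

theorem normSq_sub (a b : ℍ[R]) :
    normSq (a - b) = normSq a + normSq b - 2 * (a * star b).re := by
  rw [sub_eq_add_neg, normSq_add, normSq_neg, star_neg, mul_neg, re_neg]
  ring

theorem re_mul_star_cayleyDickson_cross (a b c d : ℍ[R]) :
    (a * c * star (star d * b)).re = (d * a * star (b * star c)).re := by
  simp only [star_mul, star_star, mul_assoc]
  rw [re_mul_comm d]
  simp only [mul_assoc]

theorem normSq_cayleyDickson_mul (a b c d : ℍ[R]) :
    normSq (a * c - star d * b) + normSq (d * a + b * star c) =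
      (normSq a + normSq b) * (normSq c + normSq d) := by
  rw [normSq_sub, normSq_add, re_mul_star_cayleyDickson_cross]
  simp only [map_mul, normSq_star]
  ring

end Quaternion

/-- The octonion norm is multiplicative: |o₁o₂| = |o₁||o₂|. -/
theorem stmt7 (o₁ o₂ : Octo) : onorm (omul o₁ o₂) = onorm o₁ * onorm o₂ := by
  have h := Quaternion.normSq_cayleyDickson_mul o₁.1 o₁.2 o₂.1 o₂.2
  simp only [Quaternion.normSq_eq_norm_mul_self, ← sq] at h
  rw [onorm, omul, h, Real.sqrt_mul (by positivity), onorm, onorm]
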